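/- In the Set Cover metric construction, if OPT is the size of the minimum set cover of (U, F), then in any 1-navigable graph on the constructed metric, every root vertex r_ℓ has out-degree at least L·OPT. -/

import Mathlib

open scoped ENNReal

/-- Vertices of the Set Cover metric construction: `L` roots, and `L` gadgets each
with a vertex for each of the `m` sets and each of the `n` elements. -/
abbrev SCVertex (L m n : ℕ) := Sum (Fin L) (Fin L × (Sum (Fin m) (Fin n)))

/-- Edge weights of the Set Cover metric construction (`⊤` means no edge):
root–set weight `1`, set–set weight `1-γ` within a gadget, set–element weight `1`
for containment, root–element weight `2-γ`. -/
noncomputable def scWeight (L m n : ℕ) (mem : Fin n → Fin m → Prop)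
    [∀ j i, Decidable (mem j i)] (γ : ℝ) :
    SCVertex L m n → SCVertex L m n → ℝ≥0∞
  | Sum.inl _, Sum.inl _ => ⊤
  | Sum.inl _, Sum.inr (_, Sum.inl _) => 1
  | Sum.inr (_, Sum.inl _), Sum.inl _ => 1
  | Sum.inl _, Sum.inr (_, Sum.inr _) => ENNReal.ofReal (2 - γ)
  | Sum.inr (_, Sum.inr _), Sum.inl _ => ENNReal.ofReal (2 - γ)
  | Sum.inr (q, Sum.inl i), Sum.inr (q', Sum.inl i') =>
      if q = q' ∧ i ≠ i' then ENNReal.ofReal (1 - γ) else ⊤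
  | Sum.inr (q, Sum.inl i), Sum.inr (q', Sum.inr j) =>
      if q = q' ∧ mem j i then 1 else ⊤
  | Sum.inr (q, Sum.inr j), Sum.inr (q', Sum.inl i) =>
      if q = q' ∧ mem j i then 1 else ⊤
  | Sum.inr (_, Sum.inr _), Sum.inr (_, Sum.inr _) => ⊤

/-- Total weight of a walk given as the list of its vertices. -/
noncomputable def chainCost {V : Type*} (w : V → V → ℝ≥0∞) : List V → ℝ≥0∞
  | [] => 0
  | [_] => 0
  | a :: b :: rest => w a b + chainCost w (b :: rest)

/-- Shortest-path metric induced by the weights `w`. -/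
noncomputable def spDist {V : Type*} [DecidableEq V] (w : V → V → ℝ≥0∞) (u v : V) : ℝ≥0∞ :=
  if u = v then 0 else ⨅ l : List V, chainCost w (u :: (l ++ [v]))

/-!
From the root `r_ℓ` the element vertex `(q, j)` is at distance at most `2 - γ` (the direct
edge), and a potential argument shows that the only vertices strictly closer to it are `(q, j)`
itself and the set vertices of gadget `q` containing `j`. Navigability from `r_ℓ` towards every
element of gadget `q` therefore makes the set neighbours of `r_ℓ` in that gadget, together with
one covering set for each element neighbour, a set cover. So `r_ℓ` has at least `OPT`
out-neighbours in each of the `L` disjoint gadgets.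
-/

section ShortestPath

variable {V : Type*} (w : V → V → ℝ≥0∞)

theorem spDist_le_weight [DecidableEq V] (u v : V) : spDist w u v ≤ w u v := by
  unfold spDist
  split_ifs
  · exact bot_le
  · simpa [chainCost] using iInf_le (fun l : List V => chainCost w (u :: (l ++ [v]))) []

variable {w} {φ : V → ℝ≥0∞}

theorem le_chainCost_add_of_le_weight_add (hφ : ∀ v v', φ v ≤ w v v' + φ v') (t : V) :
    ∀ (l : List V) (u : V), φ u ≤ chainCost w (u :: (l ++ [t])) + φ t
  | [], u => by simpa [chainCost] using hφ u t
  | b :: l, u => calc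
      φ u ≤ w u b + φ b := hφ u b
      _ ≤ w u b + (chainCost w (b :: (l ++ [t])) + φ t) := by
        gcongr; exact le_chainCost_add_of_le_weight_add hφ t l b
      _ = chainCost w (u :: (b :: l ++ [t])) + φ t := by simp [chainCost, add_assoc]

theorem le_spDist_add_of_le_weight_add [DecidableEq V] (hφ : ∀ v v', φ v ≤ w v v' + φ v')
    (u t : V) : φ u ≤ spDist w u t + φ t := by
  unfold spDist
  split_ifs with h
  · simp [h]
  · rw [ENNReal.iInf_add]
    exact le_iInf fun l => le_chainCost_add_of_le_weight_add hφ t l u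

end ShortestPath

section SetCoverMetric

variable {L m n : ℕ} (mem : Fin n → Fin m → Prop) [∀ j i, Decidable (mem j i)] (γ : ℝ)

/-- A `1`-Lipschitz lower bound for the distance to the element vertex `(q, j)`. -/
noncomputable def scPotential (q : Fin L) (j : Fin n) : SCVertex L m n → ℝ≥0∞
  | Sum.inl _ => ENNReal.ofReal (2 - γ)
  | Sum.inr (q', Sum.inl i) => if q' = q ∧ mem j i then 1 else ENNReal.ofReal (2 - γ)
  | Sum.inr (q', Sum.inr j') => if q' = q ∧ j' = j then 0 else ENNReal.ofReal (2 - γ)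

variable {mem γ}

theorem scPotential_le_scWeight_add (hγ0 : 0 ≤ γ) (hγ1 : γ ≤ 1) (q : Fin L) (j : Fin n)
    (v v' : SCVertex L m n) :
    scPotential mem γ q j v ≤ scWeight L m n mem γ v v' + scPotential mem γ q j v' := by
  have one_le : (1 : ℝ≥0∞) ≤ ENNReal.ofReal (2 - γ) := ENNReal.one_le_ofReal.mpr (by linarith)
  have le_two : ENNReal.ofReal (2 - γ) ≤ 1 + 1 := by
    rw [one_add_one_eq_two, ← ENNReal.ofReal_ofNat 2]
    exact ENNReal.ofReal_le_ofReal (by linarith)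
  have le_sum : ENNReal.ofReal (2 - γ) ≤ ENNReal.ofReal (1 - γ) + 1 := by
    rw [← ENNReal.ofReal_one, ← ENNReal.ofReal_add (by linarith) zero_le_one]
    exact ENNReal.ofReal_le_ofReal (by linarith)
  rcases v with r | ⟨p, i | k⟩ <;> rcases v' with r' | ⟨p', i' | k'⟩ <;>
    simp only [scWeight, scPotential] <;> (try split_ifs) <;>
    (try simp only [top_add, le_top, zero_le, add_zero])
  all_goals first
    | exact le_two | exact le_sum | exact le_self_add | exact le_add_self
    | exact one_le.trans le_add_self | simp_all

theorem eq_or_exists_of_spDist_lt (hγ0 : 0 ≤ γ) (hγ1 : γ ≤ 1) {q : Fin L} {j : Fin n}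
    {u : SCVertex L m n}
    (h : spDist (scWeight L m n mem γ) u (.inr (q, .inr j)) < ENNReal.ofReal (2 - γ)) :
    u = .inr (q, .inr j) ∨ ∃ i, mem j i ∧ u = .inr (q, .inl i) := by
  have hφ : scPotential mem γ q j u < ENNReal.ofReal (2 - γ) := by
    refine lt_of_le_of_lt ?_ h
    simpa [scPotential] using
      le_spDist_add_of_le_weight_add (scPotential_le_scWeight_add hγ0 hγ1 q j) u
        (.inr (q, .inr j))
  rcases u with r | ⟨p, i | k⟩
  · exact absurd hφ (lt_irrefl _)
  · by_cases hu : p = q ∧ mem j i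
    · exact .inr ⟨i, hu.2, by rw [hu.1]⟩
    · simp [scPotential, hu] at hφ
  · by_cases hu : p = q ∧ k = j
    · exact .inl (by rw [hu.1, hu.2])
    · simp [scPotential, hu] at hφ

theorem exists_root_adj_of_navigable (hγ0 : 0 ≤ γ) (hγ1 : γ ≤ 1)
    {E : SCVertex L m n → SCVertex L m n → Prop}
    (hnav : ∀ s t : SCVertex L m n, s ≠ t →
      ∃ u, E s u ∧ spDist (scWeight L m n mem γ) u t < spDist (scWeight L m n mem γ) s t)
    (ℓ q : Fin L) (j : Fin n) :
    E (.inl ℓ) (.inr (q, .inr j)) ∨ ∃ i, mem j i ∧ E (.inl ℓ) (.inr (q, .inl i)) := by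
  obtain ⟨u, hE, hd⟩ := hnav (.inl ℓ) (.inr (q, .inr j)) Sum.inl_ne_inr
  rcases eq_or_exists_of_spDist_lt hγ0 hγ1 (hd.trans_le (spDist_le_weight _ _ _)) with
    rfl | ⟨i, hi, rfl⟩
  · exact .inl hE
  · exact .inr ⟨i, hi, hE⟩

end SetCoverMetric

theorem le_card_add_card_of_covers {α β : Type*} {mem : β → α → Prop} {OPT : ℕ}
    (hOPT : IsLeast {k : ℕ | ∃ T : Finset α, (∀ j : β, ∃ i ∈ T, mem j i) ∧ T.card = k} OPT)
    (S : Finset α) (D : Finset β) (hS : ∀ j ∉ D, ∃ i ∈ S, mem j i) :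
    OPT ≤ S.card + D.card := by
  classical
  obtain ⟨⟨T, hT, -⟩, hle⟩ := hOPT
  choose c _ hc using hT
  have hcover : ∀ j, ∃ i ∈ S ∪ D.image c, mem j i := fun j => by
    by_cases hj : j ∈ D
    · exact ⟨c j, Finset.mem_union_right _ (Finset.mem_image_of_mem c hj), hc j⟩
    · obtain ⟨i, hi, hji⟩ := hS j hj
      exact ⟨i, Finset.mem_union_left _ hi, hji⟩
  calc OPT ≤ (S ∪ D.image c).card := hle ⟨_, hcover, rfl⟩
    _ ≤ S.card + (D.image c).card := Finset.card_union_le _ _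
    _ ≤ S.card + D.card := by gcongr; exact Finset.card_image_le

theorem sum_card_gadget_le_ncard {L m n : ℕ} (P : SCVertex L m n → Prop) [DecidablePred P] :
    ∑ q : Fin L, ((Finset.univ.filter fun i => P (.inr (q, .inl i))).card +
      (Finset.univ.filter fun j => P (.inr (q, .inr j))).card) ≤ {u | P u}.ncard := by
  calc _ = {x : Fin L × (Fin m ⊕ Fin n) | P (.inr x)}.ncard := by
        rw [Set.ncard_eq_toFinset_card', Set.toFinset_ofPred, Finset.card_filter,
          Fintype.sum_prod_type]
        simp only [Fintype.sum_sum_type, Finset.card_filter]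
    _ = (Sum.inr '' {x | P (.inr x)}).ncard :=
        (Set.ncard_image_of_injective _ Sum.inr_injective).symm
    _ ≤ {u | P u}.ncard := Set.ncard_le_ncard (by rintro _ ⟨x, hx, rfl⟩; exact hx)

theorem stmt7_general (L m n OPT : ℕ) (γ : ℝ) (hγ0 : 0 < γ) (hγ1 : γ < 1)
    (mem : Fin n → Fin m → Prop) [∀ j i, Decidable (mem j i)]
    (hOPT : IsLeast {k : ℕ | ∃ T : Finset (Fin m),
        (∀ j : Fin n, ∃ i ∈ T, mem j i) ∧ T.card = k} OPT)
    (E : SCVertex L m n → SCVertex L m n → Prop)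
    (hnav : ∀ s t : SCVertex L m n, s ≠ t →
      ∃ u, E s u ∧
        spDist (scWeight L m n mem γ) u t < spDist (scWeight L m n mem γ) s t) :
    ∀ ℓ : Fin L, L * OPT ≤ {u | E (Sum.inl ℓ) u}.ncard := by
  classical
  intro ℓ
  have hgadget : ∀ q : Fin L, OPT ≤
      (Finset.univ.filter fun i => E (.inl ℓ) (.inr (q, .inl i))).card +
        (Finset.univ.filter fun j => E (.inl ℓ) (.inr (q, .inr j))).card := fun q =>
    le_card_add_card_of_covers hOPT _ _ fun j hj => by
      obtain hE | ⟨i, hi, hE⟩ := exists_root_adj_of_navigable hγ0.le hγ1.le hnav ℓ q j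
      · exact absurd ((Finset.mem_filter_univ j).mpr hE) hj
      · exact ⟨i, (Finset.mem_filter_univ i).mpr hE, hi⟩
  calc L * OPT = ∑ _q : Fin L, OPT := by rw [Finset.sum_const, Finset.card_fin, smul_eq_mul]
    _ ≤ _ := Finset.sum_le_sum fun q _ => hgadget q
    _ ≤ _ := sum_card_gadget_le_ncard (E (.inl ℓ))

/-- if `OPT` is the minimum cover size of the Set Cover instance, then
in any 1-navigable graph on the constructed metric every root vertex has
out-degree at least `L·OPT`. -/
theorem stmt7 (L m n OPT : ℕ) (γ : ℝ) (hγ0 : 0 < γ) (hγ1 : γ < 1) (hL : m + n ≤ L)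
    (mem : Fin n → Fin m → Prop) [∀ j i, Decidable (mem j i)]
    (hOPT : IsLeast {k : ℕ | ∃ T : Finset (Fin m),
        (∀ j : Fin n, ∃ i ∈ T, mem j i) ∧ T.card = k} OPT)
    (E : SCVertex L m n → SCVertex L m n → Prop)
    (hnav : ∀ s t : SCVertex L m n, s ≠ t →
      ∃ u, E s u ∧
        spDist (scWeight L m n mem γ) u t < spDist (scWeight L m n mem γ) s t) :
    ∀ ℓ : Fin L, L * OPT ≤ {u | E (Sum.inl ℓ) u}.ncard :=
  stmt7_general L m n OPT γ hγ0 hγ1 mem hOPT E hnav
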